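/- arXiv:1709.07283 — 5 statements merged into one kernel-verified Lean document; each statement's English description precedes it below -/
import Mathlib

section
/- Let L₁ (n₁×n₁) and L₂ (n₂×n₂) be complex symmetric matrices with Takagi factorizations L₁ = V Λ₁ Vᵀ and L₂ = W Λ₂ Wᵀ (Λᵢ diagonal real nonnegative). If Λ₁ and Λ₂ share a common diagonal value, then the linear operator T(X) = X L₂ − L₁ conj(X) on n₁×n₂ complex matrices is singular (has nontrivial kernel). -/
open Matrix

lemma stdBasis_mul_diag {m n : Type*} [Fintype n] [DecidableEq m] [DecidableEq n]
    (i : m) (j : n) (g : n → ℂ) :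
    Matrix.single i j (1 : ℂ) * Matrix.diagonal g
      = Matrix.single i j (g j) := by
  ext a b
  simp [Matrix.mul_diagonal, Matrix.single, and_comm, mul_comm]
  aesop

lemma diag_mul_stdBasis {m n : Type*} [Fintype m] [DecidableEq m] [DecidableEq n]
    (i : m) (j : n) (f : m → ℂ) :
    Matrix.diagonal f * Matrix.single i j (1 : ℂ)
      = Matrix.single i j (f i) := by
  ext a b
  simp [Matrix.diagonal_mul, Matrix.single]
  aesop

/-- If the Takagi spectra of `L₁` and `L₂` share a common value, then the operator
`T(X) = X L₂ − L₁ conj(X)` on `n₁ × n₂` complex matrices has nontrivial kernel. -/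
theorem sylvester_type_operator_singular (n₁ n₂ : ℕ)
    (L₁ : Matrix (Fin n₁) (Fin n₁) ℂ) (L₂ : Matrix (Fin n₂) (Fin n₂) ℂ)
    (hL₁ : L₁ᵀ = L₁) (hL₂ : L₂ᵀ = L₂)
    (V : Matrix (Fin n₁) (Fin n₁) ℂ) (W : Matrix (Fin n₂) (Fin n₂) ℂ)
    (hV : V ∈ Matrix.unitaryGroup (Fin n₁) ℂ) (hW : W ∈ Matrix.unitaryGroup (Fin n₂) ℂ)
    (Λ₁ : Fin n₁ → ℝ) (Λ₂ : Fin n₂ → ℝ)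
    (hΛ₁ : ∀ i, 0 ≤ Λ₁ i) (hΛ₂ : ∀ j, 0 ≤ Λ₂ j)
    (hfac₁ : L₁ = V * Matrix.diagonal (fun i => (Λ₁ i : ℂ)) * Vᵀ)
    (hfac₂ : L₂ = W * Matrix.diagonal (fun j => (Λ₂ j : ℂ)) * Wᵀ)
    (hcommon : ∃ i j, Λ₁ i = Λ₂ j) :
    ∃ X : Matrix (Fin n₁) (Fin n₂) ℂ, X ≠ 0 ∧
      X * L₂ - L₁ * X.map (starRingEnd ℂ) = 0 := by
  obtain ⟨i, j, hij⟩ := hcommon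
  set E : Matrix (Fin n₁) (Fin n₂) ℂ := Matrix.single i j 1 with hE
  have hVu' : Vᴴ * V = 1 := Matrix.mem_unitaryGroup_iff'.mp hV
  have hWu : Wᴴ * W = 1 := Matrix.mem_unitaryGroup_iff'.mp hW
  have hVu : Vᵀ * V.map (starRingEnd ℂ) = 1 := by
    have := congrArg Matrix.transpose hVu'
    simpa [Matrix.conjTranspose, Matrix.transpose_map, Matrix.transpose_mul] using this
  refine ⟨V * E * Wᴴ, ?_, ?_⟩
  · intro h
    have h2 := congrArg (fun M => Vᴴ * M * W) h
    simp only [Matrix.mul_zero, Matrix.zero_mul] at h2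
    rw [Matrix.mul_assoc Vᴴ, Matrix.mul_assoc (V * E) Wᴴ W, hWu, Matrix.mul_one,
      ← Matrix.mul_assoc Vᴴ V E, hVu', Matrix.one_mul] at h2
    have := congrFun (congrFun h2 i) j
    simp [hE] at this
  · have hmap : (V * E * Wᴴ).map (starRingEnd ℂ)
        = V.map (starRingEnd ℂ) * E * Wᵀ := by
      rw [Matrix.map_mul, Matrix.map_mul]
      congr 1
      · congr 1
        ext a b
        simp [hE, Matrix.single]
      · ext a b
        simp [Matrix.conjTranspose_apply, Matrix.transpose_apply]
    have key : E * Matrix.diagonal (fun j => (Λ₂ j : ℂ))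
        = Matrix.diagonal (fun i => (Λ₁ i : ℂ)) * E := by
      rw [hE, stdBasis_mul_diag, diag_mul_stdBasis, hij]
    rw [hmap, hfac₁, hfac₂, sub_eq_zero]
    simp only [Matrix.mul_assoc]
    rw [← Matrix.mul_assoc Wᴴ W, hWu, Matrix.one_mul, ← Matrix.mul_assoc Vᵀ, hVu,
      Matrix.one_mul, ← Matrix.mul_assoc E, ← Matrix.mul_assoc (Matrix.diagonal _) E, key]
end

section
/- Let L₁, L₂ be complex symmetric matrices with Takagi factorizations L₁ = V Λ₁ Vᵀ, L₂ = W Λ₂ Wᵀ, where the diagonal entries Λ₁ᵢ and Λ₂ⱼ are pairwise distinct (Λ₁ᵢ ≠ Λ₂ⱼ for all i,j). Then for every Y the equation X L₂ − L₁ conj(X) = Y has the unique solution determined entrywise by (Vᴴ X W)ᵢⱼ = Λ₂ⱼ/(Λ₂ⱼ² − Λ₁ᵢ²)·(Vᴴ Y conj(W))ᵢⱼ + Λ₁ᵢ/(Λ₂ⱼ² − Λ₁ᵢ²)·conj((Vᴴ Y conj(W))ᵢⱼ). -/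
/-!
In the orthonormal frames `X = V Z Wᴴ`, `Y = V B Wᵀ` given by the Takagi factorizations, the
equation `X L₂ - L₁ conj(X) = Y` decouples into the scalar equations
`z λ₂ - λ₁ conj(z) = b`. Together with their conjugates these form a real-linear `2 × 2` system
with determinant `λ₂² - λ₁²`, which is nonzero because the `λ`s are nonnegative and distinct.
-/

open Matrix

namespace Matrix

section Unitary

variable {m n R : Type*} [Fintype m] [DecidableEq m] [Fintype n] [DecidableEq n]
  [CommRing R] [StarRing R]

theorem conjTranspose_mul_self_of_mem_unitaryGroup {V : Matrix n n R}
    (hV : V ∈ unitaryGroup n R) : Vᴴ * V = 1 :=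
  mem_unitaryGroup_iff'.mp hV

theorem mul_conjTranspose_self_of_mem_unitaryGroup {V : Matrix n n R}
    (hV : V ∈ unitaryGroup n R) : V * Vᴴ = 1 :=
  mem_unitaryGroup_iff.mp hV

theorem transpose_mul_map_star_of_mem_unitaryGroup {V : Matrix n n R}
    (hV : V ∈ unitaryGroup n R) : Vᵀ * V.map (starRingEnd R) = 1 := by
  have h := congrArg transpose (conjTranspose_mul_self_of_mem_unitaryGroup hV)
  rw [transpose_mul, transpose_one] at h
  exact h

theorem map_star_mul_transpose_of_mem_unitaryGroup {V : Matrix n n R}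
    (hV : V ∈ unitaryGroup n R) : V.map (starRingEnd R) * Vᵀ = 1 := by
  have h := congrArg transpose (mul_conjTranspose_self_of_mem_unitaryGroup hV)
  rw [transpose_mul, transpose_one] at h
  exact h

variable {V : Matrix m m R} {W : Matrix n n R}

theorem conjTranspose_mul_mul_mul_conjTranspose_mul (hV : V ∈ unitaryGroup m R)
    (hW : W ∈ unitaryGroup n R) (Z : Matrix m n R) : Vᴴ * (V * Z * Wᴴ) * W = Z := by
  simp only [Matrix.mul_assoc, conjTranspose_mul_self_of_mem_unitaryGroup hW, Matrix.mul_one,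
    ← Matrix.mul_assoc Vᴴ, conjTranspose_mul_self_of_mem_unitaryGroup hV, Matrix.one_mul]

theorem mul_conjTranspose_mul_mul_mul_conjTranspose (hV : V ∈ unitaryGroup m R)
    (hW : W ∈ unitaryGroup n R) (X : Matrix m n R) : V * (Vᴴ * X * W) * Wᴴ = X := by
  simp only [Matrix.mul_assoc, mul_conjTranspose_self_of_mem_unitaryGroup hW, Matrix.mul_one,
    ← Matrix.mul_assoc V, mul_conjTranspose_self_of_mem_unitaryGroup hV, Matrix.one_mul]

theorem mul_conjTranspose_mul_mul_map_star_mul_transpose (hV : V ∈ unitaryGroup m R)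
    (hW : W ∈ unitaryGroup n R) (Y : Matrix m n R) :
    V * (Vᴴ * Y * W.map (starRingEnd R)) * Wᵀ = Y := by
  simp only [Matrix.mul_assoc, map_star_mul_transpose_of_mem_unitaryGroup hW, Matrix.mul_one,
    ← Matrix.mul_assoc V, mul_conjTranspose_self_of_mem_unitaryGroup hV, Matrix.one_mul]

theorem sylvester_conj_of_mem_unitaryGroup (hV : V ∈ unitaryGroup m R)
    (hW : W ∈ unitaryGroup n R) (Z : Matrix m n R) (D₁ : Matrix m m R) (D₂ : Matrix n n R) :
    V * Z * Wᴴ * (W * D₂ * Wᵀ) - V * D₁ * Vᵀ * (V * Z * Wᴴ).map (starRingEnd R)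
      = V * (Z * D₂ - D₁ * Z.map (starRingEnd R)) * Wᵀ := by
  have hmap : (V * Z * Wᴴ).map (starRingEnd R)
      = V.map (starRingEnd R) * Z.map (starRingEnd R) * Wᵀ := by
    rw [Matrix.map_mul, Matrix.map_mul]
    congr 1
    ext i j
    simp [starRingEnd_apply]
  rw [hmap, Matrix.mul_sub, Matrix.sub_mul]
  congr 1
  · simp only [Matrix.mul_assoc, ← Matrix.mul_assoc Wᴴ,
      conjTranspose_mul_self_of_mem_unitaryGroup hW, Matrix.one_mul]
  · simp only [Matrix.mul_assoc, ← Matrix.mul_assoc Vᵀ,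
      transpose_mul_map_star_of_mem_unitaryGroup hV, Matrix.one_mul]

end Unitary

end Matrix

section Diagonal

variable {m n : Type*} [Fintype m] [DecidableEq m] [Fintype n] [DecidableEq n]

noncomputable def diagonalConjSylvesterSolution (d₁ : m → ℝ) (d₂ : n → ℝ) (B : Matrix m n ℂ) :
    Matrix m n ℂ :=
  of fun i j => (d₂ j : ℂ) / ((d₂ j : ℂ) ^ 2 - (d₁ i : ℂ) ^ 2) * B i j
    + (d₁ i : ℂ) / ((d₂ j : ℂ) ^ 2 - (d₁ i : ℂ) ^ 2) * starRingEnd ℂ (B i j)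

theorem diagonalConjSylvesterSolution_spec {d₁ : m → ℝ} {d₂ : n → ℝ}
    (hd : ∀ i j, d₁ i ^ 2 ≠ d₂ j ^ 2) (B : Matrix m n ℂ) :
    diagonalConjSylvesterSolution d₁ d₂ B * diagonal (fun j => (d₂ j : ℂ))
      - diagonal (fun i => (d₁ i : ℂ)) * (diagonalConjSylvesterSolution d₁ d₂ B).map
          (starRingEnd ℂ) = B := by
  ext i j
  have hden : (d₂ j : ℂ) ^ 2 - (d₁ i : ℂ) ^ 2 ≠ 0 :=
    sub_ne_zero.mpr (by exact_mod_cast (hd i j).symm)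
  simp only [diagonalConjSylvesterSolution, Matrix.sub_apply, mul_diagonal, diagonal_mul, map_apply,
    of_apply, map_add, map_mul, map_div₀, map_sub, map_pow, Complex.conj_ofReal,
    Complex.conj_conj]
  field_simp
  ring

end Diagonal

theorem sylvester_type_equation_unique_solution_general (n₁ n₂ : ℕ)
    (L₁ : Matrix (Fin n₁) (Fin n₁) ℂ) (L₂ : Matrix (Fin n₂) (Fin n₂) ℂ)
    (V : Matrix (Fin n₁) (Fin n₁) ℂ) (W : Matrix (Fin n₂) (Fin n₂) ℂ)
    (hV : V ∈ Matrix.unitaryGroup (Fin n₁) ℂ) (hW : W ∈ Matrix.unitaryGroup (Fin n₂) ℂ)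
    (Λ₁ : Fin n₁ → ℝ) (Λ₂ : Fin n₂ → ℝ)
    (hΛ₁ : ∀ i, 0 ≤ Λ₁ i) (hΛ₂ : ∀ j, 0 ≤ Λ₂ j)
    (hfac₁ : L₁ = V * Matrix.diagonal (fun i => (Λ₁ i : ℂ)) * Vᵀ)
    (hfac₂ : L₂ = W * Matrix.diagonal (fun j => (Λ₂ j : ℂ)) * Wᵀ)
    (hdistinct : ∀ i j, Λ₁ i ≠ Λ₂ j)
    (Y : Matrix (Fin n₁) (Fin n₂) ℂ) :
    ∃! X : Matrix (Fin n₁) (Fin n₂) ℂ,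
      X * L₂ - L₁ * X.map (starRingEnd ℂ) = Y ∧
      ∀ i j, (Vᴴ * X * W) i j =
        ((Λ₂ j : ℂ) / ((Λ₂ j : ℂ) ^ 2 - (Λ₁ i : ℂ) ^ 2)) * (Vᴴ * Y * W.map (starRingEnd ℂ)) i j
        + ((Λ₁ i : ℂ) / ((Λ₂ j : ℂ) ^ 2 - (Λ₁ i : ℂ) ^ 2))
            * starRingEnd ℂ ((Vᴴ * Y * W.map (starRingEnd ℂ)) i j) := by
  have hsq : ∀ i j, Λ₁ i ^ 2 ≠ Λ₂ j ^ 2 := fun i j =>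
    (pow_left_inj₀ (hΛ₁ i) (hΛ₂ j) two_ne_zero).not.mpr (hdistinct i j)
  obtain ⟨Z, hZ⟩ : ∃ Z, Z = diagonalConjSylvesterSolution Λ₁ Λ₂ (Vᴴ * Y * W.map (starRingEnd ℂ)) :=
    ⟨_, rfl⟩
  refine ⟨V * Z * Wᴴ, ⟨?_, fun i j => ?_⟩, ?_⟩
  · rw [hfac₁, hfac₂, sylvester_conj_of_mem_unitaryGroup hV hW, hZ,
      diagonalConjSylvesterSolution_spec hsq, mul_conjTranspose_mul_mul_map_star_mul_transpose hV hW]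
  · rw [conjTranspose_mul_mul_mul_conjTranspose_mul hV hW, hZ]
    rfl
  · rintro X ⟨-, hX⟩
    have hframe : Vᴴ * X * W = Z := by
      ext i j
      rw [hX, hZ]
      rfl
    rw [← hframe, mul_conjTranspose_mul_mul_mul_conjTranspose hV hW]

/-- If the Takagi singular values of `L₁` and `L₂` are pairwise distinct, the equation
`X L₂ − L₁ conj(X) = Y` has a unique solution, determined entrywise by the stated formula. -/
theorem sylvester_type_equation_unique_solution (n₁ n₂ : ℕ)
    (L₁ : Matrix (Fin n₁) (Fin n₁) ℂ) (L₂ : Matrix (Fin n₂) (Fin n₂) ℂ)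
    (hL₁ : L₁ᵀ = L₁) (hL₂ : L₂ᵀ = L₂)
    (V : Matrix (Fin n₁) (Fin n₁) ℂ) (W : Matrix (Fin n₂) (Fin n₂) ℂ)
    (hV : V ∈ Matrix.unitaryGroup (Fin n₁) ℂ) (hW : W ∈ Matrix.unitaryGroup (Fin n₂) ℂ)
    (Λ₁ : Fin n₁ → ℝ) (Λ₂ : Fin n₂ → ℝ)
    (hΛ₁ : ∀ i, 0 ≤ Λ₁ i) (hΛ₂ : ∀ j, 0 ≤ Λ₂ j)
    (hfac₁ : L₁ = V * Matrix.diagonal (fun i => (Λ₁ i : ℂ)) * Vᵀ)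
    (hfac₂ : L₂ = W * Matrix.diagonal (fun j => (Λ₂ j : ℂ)) * Wᵀ)
    (hdistinct : ∀ i j, Λ₁ i ≠ Λ₂ j)
    (Y : Matrix (Fin n₁) (Fin n₂) ℂ) :
    ∃! X : Matrix (Fin n₁) (Fin n₂) ℂ,
      X * L₂ - L₁ * X.map (starRingEnd ℂ) = Y ∧
      ∀ i j, (Vᴴ * X * W) i j =
        ((Λ₂ j : ℂ) / ((Λ₂ j : ℂ) ^ 2 - (Λ₁ i : ℂ) ^ 2)) * (Vᴴ * Y * W.map (starRingEnd ℂ)) i j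
        + ((Λ₁ i : ℂ) / ((Λ₂ j : ℂ) ^ 2 - (Λ₁ i : ℂ) ^ 2))
            * starRingEnd ℂ ((Vᴴ * Y * W.map (starRingEnd ℂ)) i j) :=
  sylvester_type_equation_unique_solution_general n₁ n₂ L₁ L₂ V W hV hW Λ₁ Λ₂ hΛ₁ hΛ₂ hfac₁ hfac₂
    hdistinct Y
end

section
/- Let ξ be an n₁×n₂ complex matrix. Then the block matrix U = [[(1+ξξᴴ)^{-1/2}, ξ(1+ξᴴξ)^{-1/2}], [−ξᴴ(1+ξξᴴ)^{-1/2}, (1+ξᴴξ)^{-1/2}]] is unitary. -/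
open Matrix ComplexOrder

/-- The positive semidefinite square root of a positive semidefinite matrix, as
`Matrix.PosSemidef.sqrt` was defined in the older Mathlib. -/
noncomputable def posSemidefSqrt {n : Type*} [Fintype n] [DecidableEq n]
    {A : Matrix n n ℂ} (hA : A.PosSemidef) : Matrix n n ℂ :=
  hA.1.eigenvectorUnitary.1 * diagonal ((↑) ∘ (√·) ∘ hA.1.eigenvalues) *
  (star hA.1.eigenvectorUnitary : Matrix n n ℂ)

/-- The positive semidefinite square root of `1 + ξ * ξᴴ`. -/
noncomputable def sqrtOnePlusSelfMulConjTranspose {n₁ n₂ : ℕ}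
    (ξ : Matrix (Fin n₁) (Fin n₂) ℂ) : Matrix (Fin n₁) (Fin n₁) ℂ :=
  posSemidefSqrt (Matrix.PosSemidef.add Matrix.PosSemidef.one
    (Matrix.posSemidef_self_mul_conjTranspose ξ))

/-- The positive semidefinite square root of `1 + ξᴴ * ξ`. -/
noncomputable def sqrtOnePlusConjTransposeMulSelf {n₁ n₂ : ℕ}
    (ξ : Matrix (Fin n₁) (Fin n₂) ℂ) : Matrix (Fin n₂) (Fin n₂) ℂ :=
  posSemidefSqrt (Matrix.PosSemidef.add Matrix.PosSemidef.one
    (Matrix.posSemidef_conjTranspose_mul_self ξ))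

/-! Blockwise, `Uᴴ U` has off-diagonal blocks `±S⁻¹ ξ T⁻¹` that cancel, and diagonal blocks
`S⁻¹ (1 + ξ ξᴴ) S⁻¹ = S⁻¹ S² S⁻¹ = 1` (similarly for `T`), where `S`, `T` are the Hermitian square
roots; for square matrices a left inverse is a two-sided one. -/

section Sqrt

variable {n : Type*} [Fintype n] [DecidableEq n] {A : Matrix n n ℂ}

theorem posSemidefSqrt_eq_cfc (hA : A.PosSemidef) : posSemidefSqrt hA = cfc Real.sqrt A := by
  rw [hA.isHermitian.cfc_eq, IsHermitian.cfc, Unitary.conjStarAlgAut_apply]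
  rfl

theorem isHermitian_posSemidefSqrt (hA : A.PosSemidef) : (posSemidefSqrt hA).IsHermitian := by
  rw [posSemidefSqrt_eq_cfc]
  exact cfc_predicate _ _

theorem posSemidefSqrt_mul_self (hA : A.PosSemidef) :
    posSemidefSqrt hA * posSemidefSqrt hA = A := by
  rw [posSemidefSqrt_eq_cfc, ← cfc_mul Real.sqrt Real.sqrt A]
  conv_rhs => rw [← cfc_id' ℝ A hA.isHermitian]
  refine cfc_congr fun x hx => Real.mul_self_sqrt ?_
  rw [hA.isHermitian.spectrum_real_eq_range_eigenvalues] at hx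
  obtain ⟨i, rfl⟩ := hx
  exact hA.eigenvalues_nonneg i

end Sqrt

theorem Matrix.nonsing_inv_mul_mul_nonsing_inv_of_mul_self_eq {n α : Type*} [Fintype n]
    [DecidableEq n] [CommRing α] {S M : Matrix n n α} (hM : IsUnit M) (hS : S * S = M) :
    S⁻¹ * M * S⁻¹ = 1 := by
  have hdet : IsUnit S.det := by
    rw [isUnit_iff_isUnit_det, ← hS, det_mul] at hM
    exact isUnit_of_mul_isUnit_left hM
  rw [← hS, ← Matrix.mul_assoc, nonsing_inv_mul _ hdet, Matrix.one_mul, mul_nonsing_inv _ hdet]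

theorem Matrix.fromBlocks_mem_unitaryGroup {m n α : Type*} [Fintype m] [Fintype n]
    [DecidableEq m] [DecidableEq n] [CommRing α] [StarRing α] {P : Matrix m m α}
    {Q : Matrix n n α} {ξ : Matrix m n α} (hP : P.IsHermitian) (hQ : Q.IsHermitian)
    (hP1 : P * (1 + ξ * ξᴴ) * P = 1) (hQ1 : Q * (1 + ξᴴ * ξ) * Q = 1) :
    fromBlocks P (ξ * Q) (-(ξᴴ * P)) Q ∈ unitaryGroup (m ⊕ n) α := by
  rw [mem_unitaryGroup_iff', star_eq_conjTranspose, fromBlocks_conjTranspose, fromBlocks_multiply,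
    ← fromBlocks_one]
  simp only [conjTranspose_neg, conjTranspose_mul, conjTranspose_conjTranspose, hP.eq, hQ.eq,
    Matrix.neg_mul, Matrix.mul_neg, neg_neg, Matrix.mul_assoc]
  congr 1
  · rw [← hP1, Matrix.mul_add, Matrix.add_mul, Matrix.mul_one, Matrix.mul_assoc, Matrix.mul_assoc]
  · exact add_neg_cancel _
  · exact add_neg_cancel _
  · rw [← hQ1, Matrix.mul_add, Matrix.add_mul, Matrix.mul_one, Matrix.mul_assoc, Matrix.mul_assoc,
      add_comm]

/-- The block matrix
`U = [[(1+ξξᴴ)^{-1/2}, ξ(1+ξᴴξ)^{-1/2}], [−ξᴴ(1+ξξᴴ)^{-1/2}, (1+ξᴴξ)^{-1/2}]]` is unitary. -/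
theorem block_matrix_unitary (n₁ n₂ : ℕ) (ξ : Matrix (Fin n₁) (Fin n₂) ℂ) :
    Matrix.fromBlocks
      (sqrtOnePlusSelfMulConjTranspose ξ)⁻¹ (ξ * (sqrtOnePlusConjTransposeMulSelf ξ)⁻¹)
      (-(ξᴴ * (sqrtOnePlusSelfMulConjTranspose ξ)⁻¹)) (sqrtOnePlusConjTransposeMulSelf ξ)⁻¹
      ∈ Matrix.unitaryGroup (Fin n₁ ⊕ Fin n₂) ℂ := by
  have hA := PosSemidef.one.add (posSemidef_self_mul_conjTranspose ξ)
  have hB := PosSemidef.one.add (posSemidef_conjTranspose_mul_self ξ)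
  refine fromBlocks_mem_unitaryGroup (isHermitian_posSemidefSqrt hA).inv
    (isHermitian_posSemidefSqrt hB).inv ?_ ?_
  · exact nonsing_inv_mul_mul_nonsing_inv_of_mul_self_eq
      (PosDef.one.add_posSemidef (posSemidef_self_mul_conjTranspose ξ)).isUnit
      (posSemidefSqrt_mul_self hA)
  · exact nonsing_inv_mul_mul_nonsing_inv_of_mul_self_eq
      (PosDef.one.add_posSemidef (posSemidef_conjTranspose_mul_self ξ)).isUnit
      (posSemidefSqrt_mul_self hB)
end

section
/- Consider the iteration ξ⁽⁰⁾ = 0, ξ⁽ⁿ⁺¹⁾ = T⁻¹(G − ξ⁽ⁿ⁾ Gᵀ conj(ξ⁽ⁿ⁾)), where T(ξ) = ξL₂ − L₁conj(ξ) is invertible. If ρ := 4‖T⁻¹(G)‖·‖T⁻¹‖·‖G‖ < 1, then ‖ξ⁽ⁿ⁾‖ ≤ 2‖T⁻¹(G)‖ for all n ≥ 1, ‖ξ⁽ⁿ⁺¹⁾ − ξ⁽ⁿ⁾‖ ≤ ρ‖ξ⁽ⁿ⁾ − ξ⁽ⁿ⁻¹⁾‖ for n ≥ 1, and the iteration converges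 to a solution ξ of G + L₁conj(ξ) − ξL₂ − ξGᵀconj(ξ) = 0 with ‖ξ − ξ⁽ⁿ⁾‖ ≤ ρⁿ/(1−ρ)·‖ξ⁽¹⁾‖. -/
/-!
The map `F(X) = T⁻¹(G − X Gᵀ conj(X))` sends the closed ball of radius `2‖T⁻¹G‖` about `0` into
itself, since `‖F X‖ ≤ ‖T⁻¹G‖ + ‖T⁻¹‖·‖G‖·‖X‖²`, and it is `ρ`-Lipschitz there, since
`X Gᵀ conj X − Y Gᵀ conj Y = (X − Y) Gᵀ conj X + Y Gᵀ conj(X − Y)`. The iterates therefore stay in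
the ball and form a Cauchy sequence with geometrically decreasing steps; the limit is a fixed point
of `F`, and applying `T` to `ξ = F ξ` gives the Riccati-type equation.
-/

open Matrix Filter Set Metric Function Topology
open scoped Matrix.Norms.L2Operator

theorem norm_apply_mul_max_zero {E F : Type*} [SeminormedAddGroup E] [SeminormedAddGroup F]
    {g : E → F} {C : ℝ} (hC : ∀ y, ‖g y‖ ≤ C * ‖y‖) (y : E) : ‖g y‖ * max C 0 = ‖g y‖ * C := by
  rcases le_or_gt 0 C with hC0 | hC0
  · rw [max_eq_left hC0]
  · have : ‖g y‖ = 0 :=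
      le_antisymm ((hC y).trans (mul_nonpos_of_nonpos_of_nonneg hC0.le (norm_nonneg _)))
        (norm_nonneg _)
    simp [this]

section ContractionOnClosedSet

variable {α : Type*} {f : α → α} {s : Set α} {x : ℕ → α}

theorem mem_of_mapsTo_of_succ_eq (hfs : MapsTo f s s) (hx0 : x 0 ∈ s)
    (hx : ∀ n, x (n + 1) = f (x n)) (n : ℕ) : x n ∈ s := by
  induction n with
  | zero => exact hx0
  | succ n ih => rw [hx]; exact hfs ih

variable [MetricSpace α] {ρ : ℝ} (hfs : MapsTo f s s)
  (hf : ∀ y ∈ s, ∀ z ∈ s, dist (f y) (f z) ≤ ρ * dist y z) (hx0 : x 0 ∈ s) (hx : ∀ n, x (n + 1) = f (x n))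
include hfs hf hx0 hx

theorem dist_succ_succ_le_of_mapsTo (n : ℕ) :
    dist (x (n + 2)) (x (n + 1)) ≤ ρ * dist (x (n + 1)) (x n) := by
  have hmem := mem_of_mapsTo_of_succ_eq hfs hx0 hx
  have h := hf _ (hmem (n + 1)) _ (hmem n)
  rwa [← hx, ← hx] at h

theorem dist_succ_le_geometric_of_mapsTo (hρ0 : 0 ≤ ρ) (n : ℕ) :
    dist (x n) (x (n + 1)) ≤ dist (x 0) (x 1) * ρ ^ n := by
  induction n with
  | zero => simp
  | succ n ih =>
    calc dist (x (n + 1)) (x (n + 2)) = dist (x (n + 2)) (x (n + 1)) := dist_comm _ _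
      _ ≤ ρ * dist (x n) (x (n + 1)) := by
        rw [dist_comm (x n)]; exact dist_succ_succ_le_of_mapsTo hfs hf hx0 hx n
      _ ≤ ρ * (dist (x 0) (x 1) * ρ ^ n) := by gcongr
      _ = dist (x 0) (x 1) * ρ ^ (n + 1) := by ring

theorem exists_isFixedPt_tendsto_of_mapsTo [CompleteSpace α] (hs : IsClosed s) (hρ0 : 0 ≤ ρ)
    (hρ : ρ < 1) :
    ∃ ξ ∈ s, IsFixedPt f ξ ∧ Tendsto x atTop (𝓝 ξ) ∧
      ∀ n, dist (x n) ξ ≤ dist (x 0) (x 1) * ρ ^ n / (1 - ρ) := by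
  have hgeo := dist_succ_le_geometric_of_mapsTo hfs hf hx0 hx hρ0
  obtain ⟨ξ, hξ⟩ := cauchySeq_tendsto_of_complete (cauchySeq_of_le_geometric _ _ hρ hgeo)
  have hξs : ξ ∈ s :=
    hs.mem_of_tendsto hξ (Eventually.of_forall (mem_of_mapsTo_of_succ_eq hfs hx0 hx))
  have hfx : Tendsto (fun n => f (x n)) atTop (𝓝 (f ξ)) := by
    refine tendsto_iff_dist_tendsto_zero.2 (squeeze_zero (fun _ => dist_nonneg)
      (fun n => hf _ (mem_of_mapsTo_of_succ_eq hfs hx0 hx n) _ hξs) ?_)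
    simpa using (tendsto_iff_dist_tendsto_zero.1 hξ).const_mul ρ
  have hxsucc : Tendsto (fun n => f (x n)) atTop (𝓝 ξ) := by
    simpa only [hx] using (tendsto_add_atTop_iff_nat 1).2 hξ
  exact ⟨ξ, hξs, tendsto_nhds_unique hfx hxsucc, hξ,
    dist_le_of_le_geometric_of_tendsto _ _ hρ hgeo hξ⟩

end ContractionOnClosedSet

namespace Matrix

variable {𝕜 m n : Type*} [RCLike 𝕜] [Fintype m] [Fintype n]

def conjSylvester (L₁ : Matrix m m 𝕜) (L₂ : Matrix n n 𝕜) : Matrix m n 𝕜 →+ Matrix m n 𝕜 where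
  toFun X := X * L₂ - L₁ * X.map (starRingEnd 𝕜)
  map_zero' := by simp
  map_add' X Y := by
    simp only [Matrix.map_add _ (map_add _), Matrix.add_mul, Matrix.mul_add]
    abel

def riccatiStep (Tinv : Matrix m n 𝕜 → Matrix m n 𝕜) (G X : Matrix m n 𝕜) : Matrix m n 𝕜 :=
  Tinv (G - X * Gᵀ * X.map (starRingEnd 𝕜))

theorem mul_transpose_mul_map_conj_sub (X Y G : Matrix m n 𝕜) :
    X * Gᵀ * X.map (starRingEnd 𝕜) - Y * Gᵀ * Y.map (starRingEnd 𝕜) =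
      (X - Y) * Gᵀ * X.map (starRingEnd 𝕜) + Y * Gᵀ * (X - Y).map (starRingEnd 𝕜) := by
  simp only [Matrix.map_sub _ (map_sub _), Matrix.sub_mul, Matrix.mul_sub]
  abel

variable [DecidableEq n]

theorem l2_opNorm_map_conj_le (A : Matrix m n 𝕜) : ‖A.map (starRingEnd 𝕜)‖ ≤ ‖A‖ := by
  rw [l2_opNorm_def]
  refine ContinuousLinearMap.opNorm_le_bound _ (norm_nonneg A) fun x => ?_
  let y : EuclideanSpace 𝕜 n := WithLp.toLp 2 (star (WithLp.ofLp x))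
  have hy : ‖y‖ = ‖x‖ := by simp [y, EuclideanSpace.norm_eq]
  -- `conj(A) x = conj(A conj(x))` entrywise, and conjugation preserves Euclidean norms
  convert A.l2_opNorm_mulVec y using 1
  · simp only [EuclideanSpace.norm_eq, y]
    congr 1
    refine Finset.sum_congr rfl fun i _ => ?_
    rw [← RCLike.norm_conj]
    simp [mulVec, dotProduct]
  · rw [hy]

@[simp]
theorem l2_opNorm_map_conj (A : Matrix m n 𝕜) : ‖A.map (starRingEnd 𝕜)‖ = ‖A‖ := by
  have h : (A.map (starRingEnd 𝕜)).map (starRingEnd 𝕜) = A := by ext; simp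
  refine le_antisymm A.l2_opNorm_map_conj_le ?_
  conv_lhs => rw [← h]
  exact l2_opNorm_map_conj_le _

variable [DecidableEq m]

@[simp]
theorem l2_opNorm_transpose (A : Matrix m n 𝕜) : ‖Aᵀ‖ = ‖A‖ := by
  have h : Aᵀ = (A.map (starRingEnd 𝕜))ᴴ := by ext; simp
  rw [h, l2_opNorm_conjTranspose, l2_opNorm_map_conj]

theorem norm_mul_transpose_mul_map_conj_le (X Z : Matrix m n 𝕜) (G : Matrix m n 𝕜) :
    ‖X * Gᵀ * Z.map (starRingEnd 𝕜)‖ ≤ ‖X‖ * ‖G‖ * ‖Z‖ :=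
  calc ‖X * Gᵀ * Z.map (starRingEnd 𝕜)‖ ≤ ‖X * Gᵀ‖ * ‖Z.map (starRingEnd 𝕜)‖ := l2_opNorm_mul _ _
    _ ≤ ‖X‖ * ‖Gᵀ‖ * ‖Z.map (starRingEnd 𝕜)‖ := by gcongr; exact l2_opNorm_mul _ _
    _ = ‖X‖ * ‖G‖ * ‖Z‖ := by rw [l2_opNorm_transpose, l2_opNorm_map_conj]

theorem norm_mul_transpose_mul_map_conj_sub_le (X Y G : Matrix m n 𝕜) :
    ‖X * Gᵀ * X.map (starRingEnd 𝕜) - Y * Gᵀ * Y.map (starRingEnd 𝕜)‖ ≤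
      (‖X‖ + ‖Y‖) * ‖G‖ * ‖X - Y‖ := by
  rw [mul_transpose_mul_map_conj_sub]
  refine (norm_add_le _ _).trans ?_
  have h₁ := norm_mul_transpose_mul_map_conj_le (X - Y) X G
  have h₂ := norm_mul_transpose_mul_map_conj_le Y (X - Y) G
  linarith

variable {Tinv : Matrix m n 𝕜 → Matrix m n 𝕜} {C : ℝ} (G : Matrix m n 𝕜)
  (hsub : ∀ X Y, Tinv (X - Y) = Tinv X - Tinv Y) (hC : ∀ Y, ‖Tinv Y‖ ≤ C * ‖Y‖) (hC0 : 0 ≤ C)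
include hsub hC hC0

theorem mapsTo_riccatiStep_closedBall (hρ : 4 * ‖Tinv G‖ * C * ‖G‖ ≤ 1) :
    MapsTo (riccatiStep Tinv G) (closedBall 0 (2 * ‖Tinv G‖)) (closedBall 0 (2 * ‖Tinv G‖)) := by
  intro X hX
  rw [mem_closedBall_zero_iff] at hX ⊢
  calc ‖riccatiStep Tinv G X‖
      ≤ ‖Tinv G‖ + ‖Tinv (X * Gᵀ * X.map (starRingEnd 𝕜))‖ := by
        rw [riccatiStep, hsub]; exact norm_sub_le _ _
    _ ≤ ‖Tinv G‖ + C * (‖X‖ * ‖G‖ * ‖X‖) := by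
        gcongr; exact (hC _).trans (by gcongr; exact norm_mul_transpose_mul_map_conj_le X X G)
    _ ≤ ‖Tinv G‖ + C * (2 * ‖Tinv G‖ * ‖G‖ * (2 * ‖Tinv G‖)) := by gcongr
    _ = ‖Tinv G‖ + ‖Tinv G‖ * (4 * ‖Tinv G‖ * C * ‖G‖) := by ring
    _ ≤ ‖Tinv G‖ + ‖Tinv G‖ * 1 := by gcongr
    _ = 2 * ‖Tinv G‖ := by ring

theorem dist_riccatiStep_le {r : ℝ} {X Y : Matrix m n 𝕜} (hX : X ∈ closedBall 0 r)
    (hY : Y ∈ closedBall 0 r) :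
    dist (riccatiStep Tinv G X) (riccatiStep Tinv G Y) ≤ 2 * r * C * ‖G‖ * dist X Y := by
  rw [mem_closedBall_zero_iff] at hX hY
  have h : riccatiStep Tinv G X - riccatiStep Tinv G Y =
      Tinv (Y * Gᵀ * Y.map (starRingEnd 𝕜) - X * Gᵀ * X.map (starRingEnd 𝕜)) := by
    rw [riccatiStep, riccatiStep, ← hsub, sub_sub_sub_cancel_left]
  rw [dist_eq_norm, dist_eq_norm, h, norm_sub_rev X Y]
  calc ‖Tinv (Y * Gᵀ * Y.map (starRingEnd 𝕜) - X * Gᵀ * X.map (starRingEnd 𝕜))‖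
      ≤ C * ((‖Y‖ + ‖X‖) * ‖G‖ * ‖Y - X‖) :=
        (hC _).trans (by gcongr; exact norm_mul_transpose_mul_map_conj_sub_le Y X G)
    _ ≤ C * ((r + r) * ‖G‖ * ‖Y - X‖) := by gcongr
    _ = 2 * r * C * ‖G‖ * ‖Y - X‖ := by ring

end Matrix

theorem xi_iteration_convergence_general (n₁ n₂ : ℕ)
    (L₁ : Matrix (Fin n₁) (Fin n₁) ℂ) (L₂ : Matrix (Fin n₂) (Fin n₂) ℂ)
    (G : Matrix (Fin n₁) (Fin n₂) ℂ)
    (T Tinv : Matrix (Fin n₁) (Fin n₂) ℂ → Matrix (Fin n₁) (Fin n₂) ℂ)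
    (hT : ∀ X, T X = X * L₂ - L₁ * X.map (starRingEnd ℂ))
    (hTinv₁ : ∀ Y, T (Tinv Y) = Y) (hTinv₂ : ∀ X, Tinv (T X) = X)
    (C : ℝ) (hC : ∀ Y, ‖Tinv Y‖ ≤ C * ‖Y‖)
    (ρ : ℝ) (hρdef : ρ = 4 * ‖Tinv G‖ * C * ‖G‖) (hρ : ρ < 1)
    (ξseq : ℕ → Matrix (Fin n₁) (Fin n₂) ℂ) (h0 : ξseq 0 = 0)
    (hrec : ∀ n, ξseq (n + 1) = Tinv (G - ξseq n * Gᵀ * (ξseq n).map (starRingEnd ℂ))) :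
    (∀ n, 1 ≤ n → ‖ξseq n‖ ≤ 2 * ‖Tinv G‖) ∧
    (∀ n, 1 ≤ n → ‖ξseq (n + 1) - ξseq n‖ ≤ ρ * ‖ξseq n - ξseq (n - 1)‖) ∧
    ∃ ξ : Matrix (Fin n₁) (Fin n₂) ℂ,
      Tendsto ξseq atTop (nhds ξ) ∧
      G + L₁ * ξ.map (starRingEnd ℂ) - ξ * L₂ - ξ * Gᵀ * ξ.map (starRingEnd ℂ) = 0 ∧
      ∀ n, ‖ξ - ξseq n‖ ≤ ρ ^ n / (1 - ρ) * ‖ξseq 1‖ := by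
  obtain rfl : T = conjSylvester L₁ L₂ := funext hT
  have hsub : ∀ X Y, Tinv (X - Y) = Tinv X - Tinv Y :=
    map_sub ((conjSylvester L₁ L₂).inverse Tinv hTinv₂ hTinv₁)
  -- `hC` admits `C < 0` when `Tinv = 0`; the lemmas want a nonnegative constant
  have hρ' : ρ = 4 * ‖Tinv G‖ * max C 0 * ‖G‖ := by
    rw [hρdef]; linear_combination (-4 * ‖G‖) * norm_apply_mul_max_zero hC G
  have hC' : ∀ Y, ‖Tinv Y‖ ≤ max C 0 * ‖Y‖ :=
    fun Y => (hC Y).trans (by gcongr; exact le_max_left _ _)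
  set s := closedBall (0 : Matrix (Fin n₁) (Fin n₂) ℂ) (2 * ‖Tinv G‖)
  have hmaps : MapsTo (riccatiStep Tinv G) s s :=
    mapsTo_riccatiStep_closedBall G hsub hC' (le_max_right _ _) (hρ' ▸ hρ.le)
  have hlip : ∀ X ∈ s, ∀ Y ∈ s,
      dist (riccatiStep Tinv G X) (riccatiStep Tinv G Y) ≤ ρ * dist X Y := fun X hX Y hY =>
    (dist_riccatiStep_le G hsub hC' (le_max_right _ _) hX hY).trans_eq (by rw [hρ']; ring)
  have h0s : ξseq 0 ∈ s := by simp [s, h0]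
  have hρ0 : 0 ≤ ρ := by rw [hρ']; positivity
  obtain ⟨ξ, -, hfix, hlim, hdist⟩ :=
    exists_isFixedPt_tendsto_of_mapsTo hmaps hlip h0s hrec isClosed_closedBall hρ0 hρ
  refine ⟨fun n _ => mem_closedBall_zero_iff.1 (mem_of_mapsTo_of_succ_eq hmaps h0s hrec n),
    fun n hn => ?_, ξ, hlim, ?_, fun n => ?_⟩
  · obtain ⟨k, rfl⟩ := Nat.exists_eq_add_of_le' hn
    simpa [dist_eq_norm] using dist_succ_succ_le_of_mapsTo hmaps hlip h0s hrec k
  · have h := hTinv₁ (G - ξ * Gᵀ * ξ.map (starRingEnd ℂ))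
    change conjSylvester L₁ L₂ (riccatiStep Tinv G ξ) = _ at h
    rw [hfix, hT] at h
    convert sub_eq_zero_of_eq h.symm using 1
    abel
  · have h := hdist n
    rw [dist_comm, dist_eq_norm, dist_eq_norm, h0, zero_sub, norm_neg] at h
    exact h.trans_eq (by ring)

/-- The fixed-point iteration `ξ⁽⁰⁾ = 0`, `ξ⁽ⁿ⁺¹⁾ = T⁻¹(G − ξ⁽ⁿ⁾ Gᵀ conj(ξ⁽ⁿ⁾))` for
`T(ξ) = ξL₂ − L₁conj(ξ)` invertible with `‖T⁻¹‖ ≤ C`: if `ρ = 4‖T⁻¹(G)‖·C·‖G‖ < 1` then the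
iterates are bounded by `2‖T⁻¹(G)‖`, consecutive differences contract with ratio `ρ`, and the
iteration converges to a solution `ξ` of `G + L₁conj(ξ) − ξL₂ − ξGᵀconj(ξ) = 0` with
`‖ξ − ξ⁽ⁿ⁾‖ ≤ ρⁿ/(1−ρ)·‖ξ⁽¹⁾‖`. -/
theorem xi_iteration_convergence (n₁ n₂ : ℕ)
    (L₁ : Matrix (Fin n₁) (Fin n₁) ℂ) (L₂ : Matrix (Fin n₂) (Fin n₂) ℂ)
    (hL₁ : L₁ᵀ = L₁) (hL₂ : L₂ᵀ = L₂)
    (G : Matrix (Fin n₁) (Fin n₂) ℂ)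
    (T Tinv : Matrix (Fin n₁) (Fin n₂) ℂ → Matrix (Fin n₁) (Fin n₂) ℂ)
    (hT : ∀ X, T X = X * L₂ - L₁ * X.map (starRingEnd ℂ))
    (hTinv₁ : ∀ Y, T (Tinv Y) = Y) (hTinv₂ : ∀ X, Tinv (T X) = X)
    (C : ℝ) (hC : ∀ Y, ‖Tinv Y‖ ≤ C * ‖Y‖)
    (ρ : ℝ) (hρdef : ρ = 4 * ‖Tinv G‖ * C * ‖G‖) (hρ : ρ < 1)
    (ξseq : ℕ → Matrix (Fin n₁) (Fin n₂) ℂ) (h0 : ξseq 0 = 0)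
    (hrec : ∀ n, ξseq (n + 1) = Tinv (G - ξseq n * Gᵀ * (ξseq n).map (starRingEnd ℂ))) :
    (∀ n, 1 ≤ n → ‖ξseq n‖ ≤ 2 * ‖Tinv G‖) ∧
    (∀ n, 1 ≤ n → ‖ξseq (n + 1) - ξseq n‖ ≤ ρ * ‖ξseq n - ξseq (n - 1)‖) ∧
    ∃ ξ : Matrix (Fin n₁) (Fin n₂) ℂ,
      Tendsto ξseq atTop (nhds ξ) ∧
      G + L₁ * ξ.map (starRingEnd ℂ) - ξ * L₂ - ξ * Gᵀ * ξ.map (starRingEnd ℂ) = 0 ∧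
      ∀ n, ‖ξ - ξseq n‖ ≤ ρ ^ n / (1 - ρ) * ‖ξseq 1‖ :=
  xi_iteration_convergence_general n₁ n₂ L₁ L₂ G T Tinv hT hTinv₁ hTinv₂ C hC ρ hρdef hρ ξseq h0
    hrec
end

section
/- If ε² < 1/6, η₂² < 1/8, η₁,η₂ ∈ [0,1], and the sequence (u_k, v_k) satisfies |u_{k+1}| ≤ (1+|u_k|)(ε²η₂²(1+|u_k|) + ε²(1+|v_k|)) and |v_{k+1}| ≤ (1+|u_k|)(ε²η₂²(1+|u_k|) + ε²η₁η₂(1+|v_k|)) with |u₁| ≤ 2ε², |v₁| ≤ 2ε²η₂(η₁+η₂), then |u_n| ≤ 2ε² and |v_n| ≤ 2ε²η₂(η₁+η₂) for all n ≥ 1. -/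
lemma eis_step_u (ε η₁ η₂ A B : ℝ) (hε2 : ε ^ 2 < 1 / 6) (hη2 : η₂ ^ 2 < 1 / 8)
    (hη₁1 : η₁ ≤ 1) (hη₂0 : 0 ≤ η₂) (hη₂1 : η₂ ≤ 1)
    (hA0 : 0 ≤ A) (hA : A ≤ 2 * ε ^ 2) (hB0 : 0 ≤ B) (hB : B ≤ 2 * ε ^ 2 * η₂ * (η₁ + η₂)) :
    (1 + A) * (ε ^ 2 * η₂ ^ 2 * (1 + A) + ε ^ 2 * (1 + B)) ≤ 2 * ε ^ 2 := by
  have he0 : (0:ℝ) ≤ ε ^ 2 := sq_nonneg ε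
  have hhalf : η₂ ≤ 1 / 2 := by nlinarith
  have h1 : 1 + A ≤ 4 / 3 := by linarith
  have h2 : 1 + B ≤ 5 / 4 := by nlinarith [mul_nonneg he0 hη₂0]
  have hin : ε ^ 2 * η₂ ^ 2 * (1 + A) + ε ^ 2 * (1 + B) ≤ ε ^ 2 * (17 / 12) := by
    nlinarith [mul_nonneg he0 (sq_nonneg η₂)]
  have hpos : 0 ≤ ε ^ 2 * η₂ ^ 2 * (1 + A) + ε ^ 2 * (1 + B) := by positivity
  calc (1 + A) * (ε ^ 2 * η₂ ^ 2 * (1 + A) + ε ^ 2 * (1 + B))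
      ≤ (4 / 3) * (ε ^ 2 * (17 / 12)) := mul_le_mul h1 hin hpos (by norm_num)
    _ ≤ 2 * ε ^ 2 := by nlinarith

lemma eis_step_v (ε η₁ η₂ A B : ℝ) (hε2 : ε ^ 2 < 1 / 6) (hη2 : η₂ ^ 2 < 1 / 8)
    (hη₁0 : 0 ≤ η₁) (hη₁1 : η₁ ≤ 1) (hη₂0 : 0 ≤ η₂) (hη₂1 : η₂ ≤ 1)
    (hA0 : 0 ≤ A) (hA : A ≤ 2 * ε ^ 2) (hB0 : 0 ≤ B) (hB : B ≤ 2 * ε ^ 2 * η₂ * (η₁ + η₂)) :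
    (1 + A) * (ε ^ 2 * η₂ ^ 2 * (1 + A) + ε ^ 2 * η₁ * η₂ * (1 + B)) ≤
      2 * ε ^ 2 * η₂ * (η₁ + η₂) := by
  have he0 : (0:ℝ) ≤ ε ^ 2 := sq_nonneg ε
  have hhalf : η₂ ≤ 1 / 2 := by nlinarith
  have h1 : 1 + A ≤ 4 / 3 := by linarith
  have h2 : 1 + B ≤ 5 / 4 := by nlinarith [mul_nonneg he0 hη₂0]
  have hin : ε ^ 2 * η₂ ^ 2 * (1 + A) + ε ^ 2 * η₁ * η₂ * (1 + B) ≤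
      ε ^ 2 * η₂ ^ 2 * (4 / 3) + ε ^ 2 * η₁ * η₂ * (5 / 4) := by
    have t1 : ε ^ 2 * η₂ ^ 2 * (1 + A) ≤ ε ^ 2 * η₂ ^ 2 * (4 / 3) :=
      mul_le_mul_of_nonneg_left h1 (by positivity)
    have t2 : ε ^ 2 * η₁ * η₂ * (1 + B) ≤ ε ^ 2 * η₁ * η₂ * (5 / 4) :=
      mul_le_mul_of_nonneg_left h2 (by positivity)
    linarith
  have hpos : 0 ≤ ε ^ 2 * η₂ ^ 2 * (1 + A) + ε ^ 2 * η₁ * η₂ * (1 + B) := by positivity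
  calc (1 + A) * (ε ^ 2 * η₂ ^ 2 * (1 + A) + ε ^ 2 * η₁ * η₂ * (1 + B))
      ≤ (4 / 3) * (ε ^ 2 * η₂ ^ 2 * (4 / 3) + ε ^ 2 * η₁ * η₂ * (5 / 4)) :=
        mul_le_mul h1 hin hpos (by norm_num)
    _ ≤ 2 * ε ^ 2 * η₂ ^ 2 + 2 * ε ^ 2 * η₁ * η₂ := by
        nlinarith [mul_nonneg he0 (sq_nonneg η₂), mul_nonneg (mul_nonneg he0 hη₁0) hη₂0]
    _ = 2 * ε ^ 2 * η₂ * (η₁ + η₂) := by ring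

/-- Inductive bound for the extended-inverse-seesaw iteration: if `ε² < 1/6`, `η₂² < 1/8`,
`η₁, η₂ ∈ [0,1]`, the starting values satisfy `|u₁| ≤ 2ε²`, `|v₁| ≤ 2ε²η₂(η₁+η₂)`, and the
sequences obey the stated recursive inequalities, then `|u_n| ≤ 2ε²` and
`|v_n| ≤ 2ε²η₂(η₁+η₂)` for all `n ≥ 1`. -/
theorem eis_iteration_bounds (ε η₁ η₂ : ℝ) (hε : 0 ≤ ε)
    (hε2 : ε ^ 2 < 1 / 6) (hη2 : η₂ ^ 2 < 1 / 8)
    (hη₁ : η₁ ∈ Set.Icc (0 : ℝ) 1) (hη₂ : η₂ ∈ Set.Icc (0 : ℝ) 1)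
    (u v : ℕ → ℝ)
    (hu1 : |u 1| ≤ 2 * ε ^ 2) (hv1 : |v 1| ≤ 2 * ε ^ 2 * η₂ * (η₁ + η₂))
    (hurec : ∀ k, 1 ≤ k → |u (k + 1)| ≤
      (1 + |u k|) * (ε ^ 2 * η₂ ^ 2 * (1 + |u k|) + ε ^ 2 * (1 + |v k|)))
    (hvrec : ∀ k, 1 ≤ k → |v (k + 1)| ≤
      (1 + |u k|) * (ε ^ 2 * η₂ ^ 2 * (1 + |u k|) + ε ^ 2 * η₁ * η₂ * (1 + |v k|))) :
    ∀ n, 1 ≤ n → |u n| ≤ 2 * ε ^ 2 ∧ |v n| ≤ 2 * ε ^ 2 * η₂ * (η₁ + η₂) := by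
  obtain ⟨hη₁0, hη₁1⟩ := hη₁
  obtain ⟨hη₂0, hη₂1⟩ := hη₂
  intro n hn
  induction n with
  | zero => omega
  | succ k ih =>
    rcases Nat.lt_or_ge k 1 with hk | hk
    · interval_cases k
      exact ⟨hu1, hv1⟩
    · obtain ⟨hu, hv⟩ := ih hk
      refine ⟨(hurec k hk).trans ?_, (hvrec k hk).trans ?_⟩
      · exact eis_step_u ε η₁ η₂ (|u k|) (|v k|) hε2 hη2 hη₁1 hη₂0 hη₂1
          (abs_nonneg _) hu (abs_nonneg _) hv
      · exact eis_step_v ε η₁ η₂ (|u k|) (|v k|) hε2 hη2 hη₁0 hη₁1 hη₂0 hη₂1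
          (abs_nonneg _) hu (abs_nonneg _) hv
end
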